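/- arXiv:2401.11189 — 2 statements merged into one kernel-verified Lean document; each statement's English description precedes it below -/
import Mathlib

section
/- Let 𝔤 ⊆ ℝ^{n×n} be a linear subspace and π_𝔤 the orthogonal projection onto 𝔤 for the Frobenius inner product. Let A : ℝ → ℝ^{n×n}, E_A : ℝ → ℝ^{n×n}, E_b : ℝ → 𝔤 be differentiable and satisfy Ė_A = -k₁E_A - A E_b and Ė_b = k₂ π_𝔤(Aᵀ E_A) with k₁, k₂ > 0. Then the function V(t) = (k₂/2)‖E_A(t)‖² + (1/2)‖E_b(t)‖² satisfies V̇(t) = -k₁k₂‖E_A(t)‖² ≤ 0, where ‖·‖ is the Frobenius norm. -/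
/-! Differentiating `V` gives `k₂⟨E_A, -k₁E_A - A E_b⟩ + k₂⟨E_b, π_𝔤(Aᵀ E_A)⟩`. The cross terms
cancel: `⟨E_A, A E_b⟩ = ⟨Aᵀ E_A, E_b⟩`, and since `E_b ∈ 𝔤` while `X - π_𝔤 X ⊥ 𝔤`, this equals
`⟨π_𝔤(Aᵀ E_A), E_b⟩`. What remains is `-k₁k₂‖E_A‖²`. -/

open Matrix

attribute [local instance] Matrix.frobeniusSeminormedAddCommGroup
  Matrix.frobeniusNormedAddCommGroup Matrix.frobeniusNormedSpace

/-- Frobenius inner product `⟨A, B⟩ = trace (Aᵀ B)`. -/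
noncomputable def frobInner {n : ℕ} (A B : Matrix (Fin n) (Fin n) ℝ) : ℝ :=
  (Aᵀ * B).trace

theorem HasDerivAt.matrix_entry {𝕜 m n : Type*} [NontriviallyNormedField 𝕜] [CompleteSpace 𝕜]
    [Fintype m] [Fintype n] {E : 𝕜 → Matrix m n 𝕜} {E' : Matrix m n 𝕜} {t : 𝕜}
    (hE : HasDerivAt E E' t) (i : m) (j : n) : HasDerivAt (fun s => E s i j) (E' i j) t :=
  (entryLinearMap 𝕜 𝕜 i j).toContinuousLinearMap.hasFDerivAt.comp_hasDerivAt t hE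

section FrobInner

variable {n : ℕ}

lemma frobInner_eq_sum (A B : Matrix (Fin n) (Fin n) ℝ) :
    frobInner A B = ∑ i, ∑ j, A i j * B i j := by
  simp only [frobInner, trace, diag, mul_apply, transpose_apply]
  exact Finset.sum_comm

lemma frobInner_comm (A B : Matrix (Fin n) (Fin n) ℝ) : frobInner A B = frobInner B A := by
  simp only [frobInner_eq_sum, mul_comm]

lemma frobInner_sub_left (A B C : Matrix (Fin n) (Fin n) ℝ) :
    frobInner (A - B) C = frobInner A C - frobInner B C := by
  simp only [frobInner, transpose_sub, Matrix.sub_mul, trace_sub]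

lemma frobInner_sub_right (A B C : Matrix (Fin n) (Fin n) ℝ) :
    frobInner A (B - C) = frobInner A B - frobInner A C := by
  simp only [frobInner, Matrix.mul_sub, trace_sub]

lemma frobInner_neg_right (A B : Matrix (Fin n) (Fin n) ℝ) :
    frobInner A (-B) = -frobInner A B := by
  simp only [frobInner, Matrix.mul_neg, trace_neg]

lemma frobInner_smul_right (c : ℝ) (A B : Matrix (Fin n) (Fin n) ℝ) :
    frobInner A (c • B) = c * frobInner A B := by
  simp only [frobInner, Matrix.mul_smul, trace_smul, smul_eq_mul]

lemma frobInner_mul_right (X A B : Matrix (Fin n) (Fin n) ℝ) :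
    frobInner X (A * B) = frobInner (Aᵀ * X) B := by
  simp only [frobInner, transpose_mul, transpose_transpose, Matrix.mul_assoc]

lemma frobInner_self (X : Matrix (Fin n) (Fin n) ℝ) : frobInner X X = ‖X‖ ^ 2 := by
  have hsum : (0 : ℝ) ≤ ∑ i, ∑ j, ‖X i j‖ ^ (2 : ℝ) := by positivity
  rw [frobenius_norm_def, ← Real.rpow_natCast, ← Real.rpow_mul hsum, frobInner_eq_sum]
  norm_num [← sq]

lemma HasDerivAt.frobInner {E F : ℝ → Matrix (Fin n) (Fin n) ℝ}
    {E' F' : Matrix (Fin n) (Fin n) ℝ} {t : ℝ} (hE : HasDerivAt E E' t) (hF : HasDerivAt F F' t) :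
    HasDerivAt (fun s => _root_.frobInner (E s) (F s))
      (_root_.frobInner (E t) F' + _root_.frobInner E' (F t)) t := by
  simp only [frobInner_eq_sum, ← Finset.sum_add_distrib]
  refine HasDerivAt.fun_sum fun i _ => HasDerivAt.fun_sum fun j _ => ?_
  rw [add_comm]
  exact (hE.matrix_entry i j).fun_mul (hF.matrix_entry i j)

lemma HasDerivAt.frobenius_norm_sq {E : ℝ → Matrix (Fin n) (Fin n) ℝ}
    {E' : Matrix (Fin n) (Fin n) ℝ} {t : ℝ} (hE : HasDerivAt E E' t) :
    HasDerivAt (fun s => ‖E s‖ ^ 2) (2 * _root_.frobInner (E t) E') t := by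
  simp only [← frobInner_self]
  convert hE.frobInner hE using 1
  rw [frobInner_comm E']
  ring

end FrobInner

theorem stmt2_general {n : ℕ} (𝔤 : Submodule ℝ (Matrix (Fin n) (Fin n) ℝ))
    (π : Matrix (Fin n) (Fin n) ℝ → Matrix (Fin n) (Fin n) ℝ)
    (hπ_orth : ∀ X, ∀ w ∈ 𝔤, frobInner (X - π X) w = 0)
    (k₁ k₂ : ℝ) (hk₁ : 0 < k₁) (hk₂ : 0 < k₂)
    (A E_A E_b : ℝ → Matrix (Fin n) (Fin n) ℝ)
    (hEb_mem : ∀ t, E_b t ∈ 𝔤)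
    (hEA : ∀ t, HasDerivAt E_A (-(k₁ • E_A t) - A t * E_b t) t)
    (hEb : ∀ t, HasDerivAt E_b (k₂ • π ((A t)ᵀ * E_A t)) t)
    (t : ℝ) :
    HasDerivAt (fun s => k₂ / 2 * ‖E_A s‖ ^ 2 + 1 / 2 * ‖E_b s‖ ^ 2)
      (-(k₁ * k₂ * ‖E_A t‖ ^ 2)) t ∧ -(k₁ * k₂ * ‖E_A t‖ ^ 2) ≤ 0 := by
  have hproj : frobInner (π ((A t)ᵀ * E_A t)) (E_b t) = frobInner ((A t)ᵀ * E_A t) (E_b t) := by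
    have := hπ_orth ((A t)ᵀ * E_A t) (E_b t) (hEb_mem t)
    rwa [frobInner_sub_left, sub_eq_zero, eq_comm] at this
  refine ⟨?_, neg_nonpos.mpr (by positivity)⟩
  refine (((hEA t).frobenius_norm_sq.const_mul (k₂ / 2)).add
    ((hEb t).frobenius_norm_sq.const_mul (1 / 2))).congr_deriv ?_
  rw [frobInner_sub_right, frobInner_neg_right, frobInner_smul_right, frobInner_smul_right,
    frobInner_self, frobInner_mul_right, frobInner_comm (E_b t), hproj]
  ring

/-- Along the error dynamics `Ė_A = -k₁ E_A - A E_b`, `Ė_b = k₂ π_𝔤(Aᵀ E_A)` with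
`k₁, k₂ > 0` and `E_b(t) ∈ 𝔤`, the Lyapunov function
`V(t) = (k₂/2)‖E_A(t)‖² + (1/2)‖E_b(t)‖²` (Frobenius norm) satisfies
`V̇(t) = -k₁ k₂ ‖E_A(t)‖² ≤ 0`. -/
theorem stmt2 {n : ℕ} (𝔤 : Submodule ℝ (Matrix (Fin n) (Fin n) ℝ))
    (π : Matrix (Fin n) (Fin n) ℝ → Matrix (Fin n) (Fin n) ℝ)
    (hπ_mem : ∀ X, π X ∈ 𝔤)
    (hπ_orth : ∀ X, ∀ w ∈ 𝔤, frobInner (X - π X) w = 0)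
    (k₁ k₂ : ℝ) (hk₁ : 0 < k₁) (hk₂ : 0 < k₂)
    (A E_A E_b : ℝ → Matrix (Fin n) (Fin n) ℝ)
    (hEb_mem : ∀ t, E_b t ∈ 𝔤)
    (hEA : ∀ t, HasDerivAt E_A (-(k₁ • E_A t) - A t * E_b t) t)
    (hEb : ∀ t, HasDerivAt E_b (k₂ • π ((A t)ᵀ * E_A t)) t)
    (t : ℝ) :
    HasDerivAt (fun s => k₂ / 2 * ‖E_A s‖ ^ 2 + 1 / 2 * ‖E_b s‖ ^ 2)
      (-(k₁ * k₂ * ‖E_A t‖ ^ 2)) t ∧ -(k₁ * k₂ * ‖E_A t‖ ^ 2) ≤ 0 :=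
  stmt2_general 𝔤 π hπ_orth k₁ k₂ hk₁ hk₂ A E_A E_b hEb_mem hEA hEb t
end

section
/- Let V : [0,∞) → ℝ be differentiable, bounded below, with V̇ uniformly continuous and V̇(t) ≤ 0 for all t. Then V̇(t) → 0 as t → ∞ (Barbalat's lemma for monotone Lyapunov functions). -/
/-!
Since `V` is nonincreasing and bounded below, it converges as `t → ∞`. Barbalat's lemma then
applies: by the mean value theorem, `(V (t + h) - V t) / h = V̇ c` for some `c ∈ (t, t + h)`;
the left side tends to `0` for each fixed `h`, and uniform continuity makes `V̇ t` close to `V̇ c`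
once `h` is small, uniformly in `t`.
-/

open Filter Set Topology

theorem AntitoneOn.exists_tendsto_atTop_of_bddBelow {α β : Type*} [LinearOrder α]
    [ConditionallyCompleteLinearOrder β] [TopologicalSpace β] [OrderTopology β]
    {f : α → β} {a : α} (hf : AntitoneOn f (Ici a)) (hbdd : BddBelow (f '' Ici a)) :
    ∃ L, Tendsto f atTop (𝓝 L) := by
  have hanti : Antitone fun t => f (max t a) := fun s t hst =>
    hf (le_max_right s a) (le_max_right t a) (max_le_max hst le_rfl)
  have hbdd' : BddBelow (range fun t => f (max t a)) :=
    hbdd.mono <| by rintro _ ⟨t, rfl⟩; exact ⟨max t a, le_max_right t a, rfl⟩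
  refine ⟨_, (tendsto_atTop_ciInf hanti hbdd').congr' ?_⟩
  filter_upwards [eventually_ge_atTop a] with t ht
  rw [max_eq_left ht]

theorem tendsto_slope_zero_of_tendsto {f : ℝ → ℝ} {L : ℝ} (hf : Tendsto f atTop (𝓝 L))
    (h : ℝ) : Tendsto (fun t => (f (t + h) - f t) / h) atTop (𝓝 0) := by
  have hshift : Tendsto (fun t => f (t + h)) atTop (𝓝 L) :=
    hf.comp (tendsto_atTop_add_const_right _ h tendsto_id)
  simpa using (hshift.sub hf).div_const h

theorem tendsto_deriv_zero_of_tendsto_of_uniformContinuousOn {f : ℝ → ℝ} {a L : ℝ}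
    (hdiff : ∀ t ∈ Ici a, DifferentiableAt ℝ f t) (hf : Tendsto f atTop (𝓝 L))
    (huc : UniformContinuousOn (deriv f) (Ici a)) :
    Tendsto (deriv f) atTop (𝓝 0) := by
  rw [Metric.tendsto_atTop]
  intro ε hε
  obtain ⟨δ, hδ, hclose⟩ := Metric.uniformContinuousOn_iff.mp huc (ε / 2) (half_pos hε)
  obtain ⟨N, hN⟩ := Metric.tendsto_atTop.mp
    (tendsto_slope_zero_of_tendsto hf (δ / 2)) (ε / 2) (half_pos hε)
  refine ⟨max N a, fun t ht => ?_⟩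
  have hta : a ≤ t := le_of_max_le_right ht
  have hdiff' : ∀ x ∈ Ici t, DifferentiableAt ℝ f x := fun x hx => hdiff x (hta.trans hx)
  obtain ⟨c, hc, hslope⟩ := exists_deriv_eq_slope f (by linarith : t < t + δ / 2)
    (fun x hx => (hdiff' x hx.1).continuousAt.continuousWithinAt)
    (fun x hx => (hdiff' x (le_of_lt hx.1)).differentiableWithinAt)
  have hct : dist c t < δ := by
    rw [Real.dist_eq, abs_of_pos (sub_pos.mpr hc.1)]
    linarith [hc.2]
  calc dist (deriv f t) 0
      ≤ dist (deriv f t) (deriv f c) + dist (deriv f c) 0 := dist_triangle _ _ _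
    _ < ε / 2 + ε / 2 := by
        gcongr
        · rw [dist_comm]
          exact hclose c (hta.trans hc.1.le) t hta hct
        · rw [hslope, add_sub_cancel_left]
          exact hN t (le_of_max_le_left ht)
    _ = ε := add_halves ε

/-- Barbalat's lemma for monotone Lyapunov functions: if `V : [0,∞) → ℝ` is
differentiable, bounded below, nonpositive-derivative (hence nonincreasing), and `V̇`
is uniformly continuous on `[0,∞)`, then `V̇(t) → 0` as `t → ∞`. -/
theorem stmt4 (V : ℝ → ℝ)
    (hdiff : ∀ t ∈ Set.Ici (0 : ℝ), DifferentiableAt ℝ V t)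
    (hbdd : BddBelow (V '' Set.Ici (0 : ℝ)))
    (huc : UniformContinuousOn (deriv V) (Set.Ici (0 : ℝ)))
    (hneg : ∀ t ∈ Set.Ici (0 : ℝ), deriv V t ≤ 0) :
    Tendsto (deriv V) atTop (nhds 0) := by
  have hanti : AntitoneOn V (Ici 0) := by
    refine antitoneOn_of_deriv_nonpos (convex_Ici 0)
      (fun t ht => (hdiff t ht).continuousAt.continuousWithinAt) ?_ ?_ <;> rw [interior_Ici]
    · exact fun t ht => (hdiff t (Ioi_subset_Ici_self ht)).differentiableWithinAt
    · exact fun t ht => hneg t (Ioi_subset_Ici_self ht)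
  obtain ⟨L, hL⟩ := hanti.exists_tendsto_atTop_of_bddBelow hbdd
  exact tendsto_deriv_zero_of_tendsto_of_uniformContinuousOn hdiff hL huc
end
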